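/- arXiv:2301.08966 — 11 statements merged into one kernel-verified Lean document; each statement's English description precedes it below -/
import Mathlib

section
/- Let M be an m×n matrix with rational entries. If w is a weighting for M and v is a coweighting for M, then 1_nᵀ·w = v·1_m = 1_nᵀ·M⁺·1_m, where M⁺ is the Moore–Penrose inverse of M. -/
/-!
Both sides are read off `v M w`: since `v M = 1` and `M w = 1`, it equals `1ᵀ w` and `v 1`.
Likewise `1ᵀ Y 1 = v M Y M w`, which collapses to `v M w` because `M Y M = M`.
-/

open Matrix

/-- `Y` is a Moore–Penrose inverse of `M`. -/
def IsMoorePenrose {m n : Type*} [Fintype m] [Fintype n]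
    (M : Matrix m n ℚ) (Y : Matrix n m ℚ) : Prop :=
  M * Y * M = M ∧ Y * M * Y = Y ∧ (Y * M)ᵀ = Y * M ∧ (M * Y)ᵀ = M * Y

namespace Matrix

variable {m n R : Type*} [Fintype m] [Fintype n] [Semiring R]

def IsWeighting (M : Matrix m n R) (w : n → R) : Prop := M *ᵥ w = 1

def IsCoweighting (M : Matrix m n R) (v : m → R) : Prop := v ᵥ* M = 1

variable {M : Matrix m n R} {w : n → R} {v : m → R}

theorem IsWeighting.one_dotProduct_eq (hw : IsWeighting M w) (hv : IsCoweighting M v) :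
    1 ⬝ᵥ w = v ⬝ᵥ 1 := by
  rw [← hv, ← hw, dotProduct_mulVec]

theorem IsWeighting.one_dotProduct_eq_of_mul_mul_eq (hw : IsWeighting M w)
    (hv : IsCoweighting M v) {Y : Matrix n m R} (hY : M * Y * M = M) :
    1 ⬝ᵥ w = 1 ⬝ᵥ (Y *ᵥ 1) :=
  calc 1 ⬝ᵥ w = v ⬝ᵥ (M *ᵥ w) := by rw [dotProduct_mulVec, hv]
    _ = v ⬝ᵥ (M *ᵥ (Y *ᵥ (M *ᵥ w))) := by
      rw [mulVec_mulVec, mulVec_mulVec, hY]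
    _ = 1 ⬝ᵥ (Y *ᵥ 1) := by rw [dotProduct_mulVec, hv, hw]

end Matrix

/-- If `w` is a weighting for an `m×n` rational matrix `M` and `v` is a
coweighting for `M`, then `1ₙᵀ·w = v·1ₘ = 1ₙᵀ·M⁺·1ₘ`, where `M⁺` is the Moore–Penrose
inverse of `M`. -/
theorem sum_weighting_eq_sum_coweighting {m n : ℕ} (M : Matrix (Fin m) (Fin n) ℚ)
    (Y : Matrix (Fin n) (Fin m) ℚ) (hY : IsMoorePenrose M Y)
    (w : Fin n → ℚ) (hw : M *ᵥ w = 1) (v : Fin m → ℚ) (hv : v ᵥ* M = 1) :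
    (1 : Fin n → ℚ) ⬝ᵥ w = v ⬝ᵥ (1 : Fin m → ℚ) ∧
      (1 : Fin n → ℚ) ⬝ᵥ w = (1 : Fin n → ℚ) ⬝ᵥ (Y *ᵥ (1 : Fin m → ℚ)) :=
  ⟨IsWeighting.one_dotProduct_eq hw hv, IsWeighting.one_dotProduct_eq_of_mul_mul_eq hw hv hY.1⟩
end

section
/- Let 𝒜 be a finite category whose adjacency matrix [𝒜] admits both a weighting w and a coweighting v (so that Leinster's Euler characteristic χ_Lein(𝒜) = 1ᵀw is defined). Then χ_Lein(𝒜) = χ(𝒜); that is, 1ᵀ·w = 1ᵀ·[𝒜]⁺·1 for every weighting w of [𝒜], where [𝒜]⁺ is the Moore–Penrose inverse of [𝒜]. -/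
open Matrix CategoryTheory

/-- The adjacency matrix of a finite category: its `(a,a')` entry is the cardinality of the
hom-set `a ⟶ a'`, as a rational number. -/
noncomputable def adjMat (A : Type*) [SmallCategory A] [Fintype A] : Matrix A A ℚ :=
  fun a a' => (Nat.card (a ⟶ a') : ℚ)

theorem one_dotProduct_weighting_eq_of_mul_mul_eq_self {m n R : Type*} [Fintype m] [Fintype n]
    [Semiring R] {M : Matrix m n R} {Y : Matrix n m R} (hMYM : M * Y * M = M)
    {w : n → R} (hw : M *ᵥ w = 1) {v : m → R} (hv : v ᵥ* M = 1) :
    (1 : n → R) ⬝ᵥ w = (1 : n → R) ⬝ᵥ (Y *ᵥ (1 : m → R)) :=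
  calc (1 : n → R) ⬝ᵥ w = v ⬝ᵥ (M *ᵥ w) := by rw [dotProduct_mulVec, hv]
    _ = v ⬝ᵥ ((M * Y * M) *ᵥ w) := by rw [hMYM]
    _ = (v ᵥ* M) ⬝ᵥ (Y *ᵥ (M *ᵥ w)) := by
        rw [← mulVec_mulVec, ← mulVec_mulVec, dotProduct_mulVec]
    _ = (1 : n → R) ⬝ᵥ (Y *ᵥ (1 : m → R)) := by rw [hv, hw]

/-- If the adjacency matrix of a finite category `𝒜` admits both a weighting `w`
and a coweighting `v` (so Leinster's Euler characteristic `χ_Lein(𝒜) = 1ᵀw` is defined), then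
`χ_Lein(𝒜) = χ(𝒜)`, i.e. `1ᵀ·w = 1ᵀ·[𝒜]⁺·1` where `[𝒜]⁺` is the Moore–Penrose inverse of
the adjacency matrix `[𝒜]`. -/
theorem chiLein_eq_chi (A : Type) [SmallCategory A] [Fintype A]
    [∀ a b : A, Finite (a ⟶ b)]
    (w : A → ℚ) (hw : adjMat A *ᵥ w = 1)
    (v : A → ℚ) (hv : v ᵥ* adjMat A = 1)
    (Y : Matrix A A ℚ) (hY : IsMoorePenrose (adjMat A) Y) :
    (1 : A → ℚ) ⬝ᵥ w = (1 : A → ℚ) ⬝ᵥ (Y *ᵥ (1 : A → ℚ)) :=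
  one_dotProduct_weighting_eq_of_mul_mul_eq_self hY.1 hw hv
end

section
/- Let L : 𝒜 ⇄ ℬ : R be an adjunction (L left adjoint to R) between finite categories. Assume the adjacency matrix [𝒜] has a coweighting and [ℬ] has a weighting. Then [ℬ] has a coweighting (namely 1ᵀ·[𝒜]⁺·[L]ᵀ), [𝒜] has a weighting (namely [R]·[ℬ]⁺·1), and χ(𝒜) = χ(ℬ), i.e., 1ᵀ·[𝒜]⁺·1 = 1ᵀ·[ℬ]⁺·1. -/
/-!
The adjunction bijections `𝒜(a, R b) ≅ ℬ(L a, b)` give the matrix identity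
`[L]ᵀ·[ℬ] = [𝒜]·[R]`, while `[L]ᵀ` and `[R]` preserve the all-ones vector from the appropriate
side. Because `M·M⁺·M = M`, the row vector `1ᵀ·M⁺` is a coweighting as soon as `M` has one, and
dually `M⁺·1` is a weighting; pushing these across the identity gives the new (co)weightings.
The Euler measure of `𝒜` is the total mass of the coweighting `1ᵀ·[𝒜]⁺`, which agrees with the
total mass of any weighting, in particular of `[R]·[ℬ]⁺·1`, and that is `χ(ℬ)`.
-/

open Matrix CategoryTheory

/-- The matrix of a functor `L : 𝒜 → ℬ`: its `(b,a)` entry is `1` if `L(a) = b`, else `0`. -/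
def funcMat {A B : Type*} [SmallCategory A] [SmallCategory B] [DecidableEq B]
    (L : A ⥤ B) : Matrix B A ℚ :=
  fun b a => if L.obj a = b then 1 else 0

namespace Matrix

variable {m n α : Type*} [Fintype m] [Fintype n] [Semiring α]

theorem one_vecMul_vecMul_eq_one_of_mul_mul_eq {M : Matrix m n α} {Y : Matrix n m α}
    (hMYM : M * Y * M = M) {v : m → α} (hv : v ᵥ* M = 1) : ((1 : n → α) ᵥ* Y) ᵥ* M = 1 := by
  rw [← hv, vecMul_vecMul, vecMul_vecMul, ← Matrix.mul_assoc, hMYM]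

theorem mulVec_mulVec_one_eq_one_of_mul_mul_eq {M : Matrix m n α} {Y : Matrix n m α}
    (hMYM : M * Y * M = M) {w : n → α} (hw : M *ᵥ w = 1) : M *ᵥ (Y *ᵥ (1 : m → α)) = 1 := by
  rw [← hw, mulVec_mulVec, mulVec_mulVec, hMYM]

theorem dotProduct_one_eq_one_dotProduct_of_vecMul_of_mulVec {M : Matrix m n α}
    {u : m → α} (hu : u ᵥ* M = 1) {w : n → α} (hw : M *ᵥ w = 1) : u ⬝ᵥ 1 = 1 ⬝ᵥ w := by
  rw [← hw, dotProduct_mulVec, hu]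

end Matrix

theorem one_vecMul_funcMat {C D : Type*} [SmallCategory C] [SmallCategory D] [Fintype D]
    [DecidableEq D] (F : C ⥤ D) : (1 : D → ℚ) ᵥ* funcMat F = 1 := by
  ext c
  simp [vecMul, dotProduct, funcMat]

theorem transpose_funcMat_mulVec_one {C D : Type*} [SmallCategory C] [SmallCategory D]
    [Fintype D] [DecidableEq D] (F : C ⥤ D) : (funcMat F)ᵀ *ᵥ (1 : D → ℚ) = 1 := by
  rw [mulVec_transpose, one_vecMul_funcMat]

theorem CategoryTheory.Adjunction.transpose_funcMat_mul_adjMat {A B : Type*} [SmallCategory A]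
    [SmallCategory B] [Fintype A] [Fintype B] [DecidableEq A] [DecidableEq B]
    {L : A ⥤ B} {R : B ⥤ A} (adj : L ⊣ R) :
    (funcMat L)ᵀ * adjMat B = adjMat A * funcMat R := by
  ext a b
  simp only [mul_apply, transpose_apply, funcMat, ite_mul, mul_ite, one_mul, mul_one,
    zero_mul, mul_zero, Finset.sum_ite_eq, Finset.mem_univ, if_true, adjMat]
  exact congrArg Nat.cast (Nat.card_congr (adj.homEquiv a b))

/-- Let `L : 𝒜 ⇄ ℬ : R` be an adjunction between finite categories. If `[𝒜]`
has a coweighting and `[ℬ]` has a weighting, then `1ᵀ·[𝒜]⁺·[L]ᵀ` is a coweighting for `[ℬ]`,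
`[R]·[ℬ]⁺·1` is a weighting for `[𝒜]`, and `χ(𝒜) = χ(ℬ)`, i.e.
`1ᵀ·[𝒜]⁺·1 = 1ᵀ·[ℬ]⁺·1`. -/
theorem chi_eq_of_adjunction (A B : Type) [SmallCategory A] [SmallCategory B]
    [Fintype A] [Fintype B] [DecidableEq A] [DecidableEq B]
    [∀ a a' : A, Finite (a ⟶ a')] [∀ b b' : B, Finite (b ⟶ b')]
    (L : A ⥤ B) (R : B ⥤ A) (adj : L ⊣ R)
    (YA : Matrix A A ℚ) (hYA : IsMoorePenrose (adjMat A) YA)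
    (YB : Matrix B B ℚ) (hYB : IsMoorePenrose (adjMat B) YB)
    (v : A → ℚ) (hv : v ᵥ* adjMat A = 1)
    (w : B → ℚ) (hw : adjMat B *ᵥ w = 1) :
    (((1 : A → ℚ) ᵥ* YA) ᵥ* (funcMat L)ᵀ) ᵥ* adjMat B = 1 ∧
      adjMat A *ᵥ (funcMat R *ᵥ (YB *ᵥ (1 : B → ℚ))) = 1 ∧
      (1 : A → ℚ) ⬝ᵥ (YA *ᵥ (1 : A → ℚ)) = (1 : B → ℚ) ⬝ᵥ (YB *ᵥ (1 : B → ℚ)) := by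
  have intertwine := adj.transpose_funcMat_mul_adjMat
  have coweightA := one_vecMul_vecMul_eq_one_of_mul_mul_eq hYA.1 hv
  have weightB := mulVec_mulVec_one_eq_one_of_mul_mul_eq hYB.1 hw
  have weightA : adjMat A *ᵥ (funcMat R *ᵥ (YB *ᵥ (1 : B → ℚ))) = 1 := by
    rw [mulVec_mulVec, ← intertwine, ← mulVec_mulVec, weightB, transpose_funcMat_mulVec_one]
  refine ⟨?_, weightA, ?_⟩
  · rw [vecMul_vecMul, intertwine, ← vecMul_vecMul, coweightA, one_vecMul_funcMat]
  · rw [dotProduct_mulVec, dotProduct_one_eq_one_dotProduct_of_vecMul_of_mulVec coweightA weightA,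
      dotProduct_mulVec _ (funcMat R), one_vecMul_funcMat]
end

section
/- Let 𝒜 be a finite category and F : 𝒜 → Cat a functor such that each F(a) is a finite category. Then for all objects (a,x) and (a',x') of the Grothendieck construction G(F), the cardinality of the hom-set G(F)((a,x),(a',x')) equals the sum over objects y of F(a') of (the number of morphisms f : a → a' in 𝒜 with F(f)(x) = y) times (the cardinality of F(a')(y,x')). Equivalently, [G(F)] = [G(L₁(F))]·[G(L₂(F))]. -/
open Matrix CategoryTheory

/-- For a finite category `𝒜` and a functor `F : 𝒜 → Cat` with each `F(a)`
finite, the cardinality of the hom-set `G(F)((a,x),(a',x'))` of the Grothendieck construction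
equals the sum over objects `y` of `F(a')` of the number of morphisms `f : a ⟶ a'` with
`F(f)(x) = y` times the cardinality of `F(a')(y,x')`; equivalently
`[G(F)] = [G(L₁(F))]·[G(L₂(F))]`. -/
theorem grothendieck_adj_factorization (A : Type) [SmallCategory A] [Fintype A]
    [∀ a a' : A, Finite (a ⟶ a')] (F : A ⥤ Cat)
    [∀ a : A, Fintype (F.obj a)] [∀ (a : A) (x y : F.obj a), Finite (x ⟶ y)] :
    ∀ (a a' : A) (x : F.obj a) (x' : F.obj a'),
      Nat.card ((⟨a, x⟩ : Grothendieck F) ⟶ ⟨a', x'⟩) =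
        ∑ y : F.obj a',
          Nat.card {f : a ⟶ a' // (F.map f).toFunctor.obj x = y} * Nat.card (y ⟶ x') := by
  intro a a' x x'
  classical
  have := Fintype.ofFinite (a ⟶ a')
  have e : ((⟨a, x⟩ : Grothendieck F) ⟶ ⟨a', x'⟩) ≃
      Σ f : a ⟶ a', ((F.map f).toFunctor.obj x ⟶ x') :=
    { toFun := fun φ => ⟨φ.base, φ.fiber⟩
      invFun := fun p => ⟨p.1, p.2⟩
      left_inv := fun φ => rfl
      right_inv := fun p => rfl }
  have inst2 : ∀ f : a ⟶ a', Fintype ((F.map f).toFunctor.obj x ⟶ x') := fun f => Fintype.ofFinite _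
  rw [Nat.card_congr e, Nat.card_eq_fintype_card, Fintype.card_sigma]
  simp only [← Nat.card_eq_fintype_card]
  rw [← Fintype.sum_fiberwise (fun f : a ⟶ a' => (F.map f).toFunctor.obj x)
      (fun f => Nat.card ((F.map f).toFunctor.obj x ⟶ x'))]
  refine Finset.sum_congr rfl fun y _ => ?_
  rw [Nat.card_eq_fintype_card, Fintype.card_eq_sum_ones, Finset.sum_mul, one_mul]
  refine Finset.sum_congr rfl fun f _ => ?_
  obtain ⟨f, hf⟩ := f
  subst hf
  rfl
end

section
/- Let 𝒜 be a finite partially ordered set, regarded as a category, and let F : 𝒜 → Cat be a functor such that each F(a) is a finite category. Then the row space of [G(F)] = [G(L₁(F))]·[G(L₂(F))] equals the row space of [G(L₂(F))]; that is, the span of the rows of the adjacency matrix of the Grothendieck construction G(F) equals the span of the rows of the block diagonal matrix [G(L₂(F))]. -/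
open Matrix CategoryTheory

/-- The adjacency matrix of the Grothendieck construction `G(F)`: its `((a,x),(a',x'))` entry
is the cardinality of the hom-set `G(F)((a,x),(a',x'))`. -/
noncomputable def gadjMat {A : Type} [SmallCategory A] (F : A ⥤ Cat) :
    Matrix (Grothendieck F) (Grothendieck F) ℚ :=
  fun X Y => (Nat.card (X ⟶ Y) : ℚ)

/-- The matrix `[G(L₂(F))]`: its `((a,x),(a',x'))` entry is the cardinality of the hom-set
`F(a)(x,x')` if `a = a'` and `0` otherwise; it is block diagonal with blocks `[F(a)]`. -/
noncomputable def L2mat {A : Type} [SmallCategory A] [DecidableEq A] (F : A ⥤ Cat) :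
    Matrix (Grothendieck F) (Grothendieck F) ℚ :=
  fun X Y =>
    if h : X.base = Y.base then
      (Nat.card ((h ▸ X.fiber : F.obj Y.base) ⟶ Y.fiber) : ℚ)
    else 0

/-- The row space of a matrix: the span of its rows. -/
def rowSpace {n : Type*} [Fintype n] (M : Matrix n n ℚ) : Submodule ℚ (n → ℚ) :=
  Submodule.span ℚ (Set.range fun i => M i)

section Aux

variable {A : Type} [PartialOrder A] (F : A ⥤ Cat)


/-- Hom sets in the Grothendieck construction over a poset. -/
def grHomEquiv {X Y : Grothendieck F} (h : X.base ≤ Y.base) :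
    (X ⟶ Y) ≃ ((F.map (homOfLE h)).toFunctor.obj X.fiber ⟶ Y.fiber) where
  toFun φ := eqToHom (by rw [Subsingleton.elim (homOfLE h) φ.base]) ≫ φ.fiber
  invFun g := ⟨homOfLE h, g⟩
  left_inv φ := by
    refine Grothendieck.ext _ _ (Subsingleton.elim _ _) ?_
    simp
  right_inv g := by simp

open Classical in
theorem gadj_apply (X Y : Grothendieck F) :
    gadjMat F X Y =
      if h : X.base ≤ Y.base then
        (Nat.card ((F.map (homOfLE h)).toFunctor.obj X.fiber ⟶ Y.fiber) : ℚ)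
      else 0 := by
  unfold gadjMat
  split
  · next h => rw [Nat.card_congr (grHomEquiv F h)]
  · next h =>
    have : IsEmpty (X ⟶ Y) := ⟨fun φ => h (leOfHom φ.base)⟩
    simp [Nat.card_of_isEmpty]

open Classical in
/-- The matrix `[G(L₁(F))]`. -/
noncomputable def L1mat : Matrix (Grothendieck F) (Grothendieck F) ℚ :=
  fun X Y =>
    if ∃ h : X.base ≤ Y.base, (F.map (homOfLE h)).toFunctor.obj X.fiber = Y.fiber then 1 else 0

variable [DecidableEq A] [Fintype (Grothendieck F)]

theorem gadj_eq_mul : gadjMat F = L1mat F * L2mat F := by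
  classical
  ext X Y
  rw [Matrix.mul_apply, gadj_apply]
  split
  · next h =>
    rw [Finset.sum_eq_single (Grothendieck.mk Y.base ((F.map (homOfLE h)).toFunctor.obj X.fiber))]
    · rw [L1mat, if_pos ⟨h, rfl⟩, L2mat, dif_pos rfl, one_mul]
    · intro Z _ hZ
      rcases Classical.em (∃ h' : X.base ≤ Z.base,
          (F.map (homOfLE h')).toFunctor.obj X.fiber = Z.fiber) with hc | hc
      · rcases Classical.em (Z.base = Y.base) with hb | hb
        · exfalso
          apply hZ
          obtain ⟨a, z⟩ := Z
          obtain ⟨h', hf⟩ := hc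
          dsimp at hb hf
          subst hb
          rw [← hf]
        · rw [L2mat, dif_neg hb, mul_zero]
      · rw [L1mat, if_neg hc, zero_mul]
    · intro hn
      exact absurd (Finset.mem_univ _) hn
  · next h =>
    symm
    apply Finset.sum_eq_zero
    intro Z _
    rcases Classical.em (∃ h' : X.base ≤ Z.base,
        (F.map (homOfLE h')).toFunctor.obj X.fiber = Z.fiber) with hc | hc
    · rcases Classical.em (Z.base = Y.base) with hb | hb
      · exact absurd (hb ▸ hc.1) h
      · rw [L2mat, dif_neg hb, mul_zero]
    · rw [L1mat, if_neg hc, zero_mul]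

theorem L1_blockTriangular :
    (L1mat F).BlockTriangular (fun X => toLinearExtension X.base) := by
  intro X Y hlt
  rw [L1mat, if_neg]
  rintro ⟨h, -⟩
  exact absurd (toLinearExtension.monotone h) (not_le.mpr hlt)

open Classical in
theorem L1_diag_block (X Y : Grothendieck F) (hb : X.base = Y.base) :
    L1mat F X Y = if X = Y then 1 else 0 := by
  obtain ⟨a, x⟩ := X
  obtain ⟨a', y⟩ := Y
  dsimp at hb
  subst hb
  rw [L1mat]
  congr 1
  rw [eq_iff_iff]
  constructor
  · rintro ⟨h, hf⟩
    have : homOfLE h = 𝟙 a := Subsingleton.elim _ _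
    rw [this, CategoryTheory.Functor.map_id] at hf
    simp only [Cat.Hom.id_obj] at hf
    rw [hf]
  · intro heq
    rw [Grothendieck.mk.injEq] at heq
    obtain ⟨-, hxy⟩ := heq
    rw [heq_iff_eq] at hxy
    subst hxy
    refine ⟨le_refl a, ?_⟩
    rw [show homOfLE (le_refl a) = 𝟙 a from rfl, CategoryTheory.Functor.map_id]
    rfl

open Classical in
theorem L1_det : (L1mat F).det = 1 := by
  classical
  rw [(L1_blockTriangular F).det]
  apply Finset.prod_eq_one
  intro a _
  have : (L1mat F).toSquareBlock (fun X => toLinearExtension X.base) a = 1 := by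
    ext ⟨X, hX⟩ ⟨Y, hY⟩
    have hb : X.base = Y.base := hX.trans hY.symm
    rw [Matrix.toSquareBlock_def, Matrix.of_apply, L1_diag_block F X Y hb, Matrix.one_apply]
    simp [Subtype.ext_iff]
  rw [this, Matrix.det_one]

theorem rowSpace_gadj_eq_rowSpace_L2' :
    rowSpace (gadjMat F) = rowSpace (L2mat F) := by
  classical
  have hL1 : IsUnit (L1mat F).det := by rw [L1_det]; exact isUnit_one
  have hsurj : Function.Surjective (L1mat F).vecMulLinear := by
    intro v
    refine ⟨(L1mat F)⁻¹.vecMulLinear v, ?_⟩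
    simp [Matrix.vecMulLinear_apply, Matrix.vecMul_vecMul,
      Matrix.nonsing_inv_mul _ hL1]
  have h1 : ∀ M : Matrix (Grothendieck F) (Grothendieck F) ℚ,
      rowSpace M = LinearMap.range M.vecMulLinear := fun M =>
    (range_vecMulLinear M).symm
  rw [h1, h1, gadj_eq_mul]
  have hcomp : (L1mat F * L2mat F).vecMulLinear =
      (L2mat F).vecMulLinear.comp (L1mat F).vecMulLinear := by
    apply LinearMap.ext
    intro v
    simp [Matrix.vecMulLinear_apply, Matrix.vecMul_vecMul]
  rw [hcomp, LinearMap.range_comp, LinearMap.range_eq_top.mpr hsurj, Submodule.map_top]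

end Aux

/-- For a finite poset `𝒜` (as a category) and a functor `F : 𝒜 → Cat` with
each `F(a)` a finite category, the row space of the adjacency matrix `[G(F)]` of the
Grothendieck construction equals the row space of the block diagonal matrix `[G(L₂(F))]`. -/
theorem rowSpace_gadj_eq_rowSpace_L2 (A : Type) [PartialOrder A] [Fintype A] [DecidableEq A]
    (F : A ⥤ Cat)
    [∀ a : A, Fintype (F.obj a)] [∀ (a : A) (x y : F.obj a), Finite (x ⟶ y)]
    [Fintype (Grothendieck F)] :
    rowSpace (gadjMat F) = rowSpace (L2mat F) :=
  rowSpace_gadj_eq_rowSpace_L2' F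
end

section
/- Let 𝒜 be a finite category with objects a₁,…,a_m and F : 𝒜 → Cat a functor such that each F(aᵢ) is a finite category. Suppose (λ₁,…,λ_m) is a weighting for the adjacency matrix [𝒜] and, for each i, vᵢ is a weighting for [F(aᵢ)]. Then the vector assigning to the object (aᵢ,x) of the Grothendieck construction G(F) the value λᵢ·vᵢ(x) is a weighting for the adjacency matrix [G(F)]. -/
open Matrix CategoryTheory

/-- Hom-sets in the Grothendieck construction are sigma types. -/
def homEquivAux {A : Type} [SmallCategory A] (F : A ⥤ Cat) (X Y : Grothendieck F) :
    (X ⟶ Y) ≃ Σ f : X.base ⟶ Y.base, ((F.map f).toFunctor.obj X.fiber ⟶ Y.fiber) where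
  toFun g := ⟨g.base, g.fiber⟩
  invFun p := ⟨p.1, p.2⟩
  left_inv g := rfl
  right_inv p := rfl

/-- Objects of the Grothendieck construction form a sigma type. -/
def objEquivAux {A : Type} [SmallCategory A] (F : A ⥤ Cat) :
    Grothendieck F ≃ Σ a : A, F.obj a where
  toFun X := ⟨X.base, X.fiber⟩
  invFun p := ⟨p.1, p.2⟩
  left_inv X := rfl
  right_inv p := rfl

/-- Let `𝒜` be a finite category and `F : 𝒜 → Cat` a functor with each `F(a)`
a finite category. If `λ` is a weighting for `[𝒜]` and, for each object `a`, `v a` is a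
weighting for `[F(a)]`, then the vector assigning to the object `(a,x)` of the Grothendieck
construction the value `λ(a)·v a (x)` is a weighting for `[G(F)]`. -/
theorem grothendieck_weighting (A : Type) [SmallCategory A] [Fintype A]
    [∀ a a' : A, Finite (a ⟶ a')] (F : A ⥤ Cat)
    [∀ a : A, Fintype (F.obj a)] [∀ (a : A) (x y : F.obj a), Finite (x ⟶ y)]
    [Fintype (Grothendieck F)]
    (lam : A → ℚ) (hlam : adjMat A *ᵥ lam = 1)
    (v : ∀ a : A, F.obj a → ℚ) (hv : ∀ a : A, adjMat (F.obj a) *ᵥ v a = 1) :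
    gadjMat F *ᵥ (fun X : Grothendieck F => lam X.base * v X.base X.fiber) = 1 := by
  classical
  letI : ∀ a a' : A, Fintype (a ⟶ a') := fun _ _ => Fintype.ofFinite _
  letI : ∀ (a : A) (x y : F.obj a), Fintype (x ⟶ y) := fun _ _ _ => Fintype.ofFinite _
  funext X
  obtain ⟨a, x⟩ := X
  have key : ∀ Y : Grothendieck F,
      (Nat.card ((Grothendieck.mk a x) ⟶ Y) : ℚ) =
        ∑ f : a ⟶ Y.base, (Nat.card ((F.map f).toFunctor.obj x ⟶ Y.fiber) : ℚ) := by
    intro Y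
    rw [Nat.card_congr (homEquivAux F (Grothendieck.mk a x) Y),
      Nat.card_eq_fintype_card, Fintype.card_sigma]
    push_cast
    refine Finset.sum_congr rfl fun f _ => ?_
    rw [Nat.card_eq_fintype_card]
  simp only [mulVec, dotProduct, gadjMat, Pi.one_apply]
  rw [← Equiv.sum_comp (objEquivAux F).symm
      (fun Y => (Nat.card ((Grothendieck.mk a x) ⟶ Y) : ℚ) * (lam Y.base * v Y.base Y.fiber))]
  rw [← Finset.univ_sigma_univ, Finset.sum_sigma]
  have step1 : ∀ a' : A,
      ∑ x' : F.obj a',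
        (Nat.card ((Grothendieck.mk a x) ⟶ (objEquivAux F).symm ⟨a', x'⟩) : ℚ) *
          (lam a' * v a' x')
        = (Nat.card (a ⟶ a') : ℚ) * lam a' := by
    intro a'
    have hva' : ∀ z : F.obj a', ∑ x' : F.obj a', (Nat.card (z ⟶ x') : ℚ) * v a' x' = 1 := by
      intro z
      have := congrFun (hv a') z
      simpa [mulVec, dotProduct, adjMat] using this
    calc ∑ x' : F.obj a',
          (Nat.card ((Grothendieck.mk a x) ⟶ (objEquivAux F).symm ⟨a', x'⟩) : ℚ) *
            (lam a' * v a' x')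
        = ∑ x' : F.obj a', ∑ f : a ⟶ a',
            (Nat.card ((F.map f).toFunctor.obj x ⟶ x') : ℚ) * (lam a' * v a' x') := by
          refine Finset.sum_congr rfl fun x' _ => ?_
          rw [key ((objEquivAux F).symm ⟨a', x'⟩), Finset.sum_mul]
          rfl
      _ = ∑ f : a ⟶ a', lam a' * ∑ x' : F.obj a',
            (Nat.card ((F.map f).toFunctor.obj x ⟶ x') : ℚ) * v a' x' := by
          rw [Finset.sum_comm]
          refine Finset.sum_congr rfl fun f _ => ?_
          rw [Finset.mul_sum]
          refine Finset.sum_congr rfl fun x' _ => ?_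
          ring
      _ = ∑ f : a ⟶ a', lam a' * 1 := by
          refine Finset.sum_congr rfl fun f _ => ?_
          rw [hva' ((F.map f).toFunctor.obj x)]
      _ = (Nat.card (a ⟶ a') : ℚ) * lam a' := by
          simp [Finset.sum_const, Nat.card_eq_fintype_card, mul_comm]
  refine Eq.trans (Finset.sum_congr rfl fun a' _ => step1 a') ?_
  have := congrFun hlam a
  simpa [mulVec, dotProduct, adjMat] using this
end

section
/- Let 𝒜 be a finite category with objects a₁,…,a_m and F : 𝒜 → Cat a functor such that each F(aᵢ) is a finite category. Assume that [G(F)] has a coweighting, [𝒜] has a weighting, and each [F(aᵢ)] has both a weighting and a coweighting. Then χ(G(F)) = Σᵢ λᵢ·χ(F(aᵢ)), where (λ₁,…,λ_m) = [𝒜]⁺·1; that is, χ(G(F)) = χ(F)·[𝒜]⁺·1 where χ(F) is the row vector (χ(F(a₁)),…,χ(F(a_m))). -/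
open Matrix CategoryTheory

/-- Generic lemma: if `M * Y * M = M` and `M *ᵥ w = 1`, then for any row vector of the
form `u ᵥ* M` we have `(u ᵥ* M) ⬝ᵥ (Y *ᵥ 1) = (u ᵥ* M) ⬝ᵥ w`. -/
lemma key_row {n : Type*} [Fintype n] (M Y : Matrix n n ℚ)
    (h : M * Y * M = M) (u w : n → ℚ) (hw : M *ᵥ w = 1) :
    (u ᵥ* M) ⬝ᵥ (Y *ᵥ (1 : n → ℚ)) = (u ᵥ* M) ⬝ᵥ w := by
  calc (u ᵥ* M) ⬝ᵥ (Y *ᵥ (1 : n → ℚ))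
      = (u ᵥ* M) ⬝ᵥ (Y *ᵥ (M *ᵥ w)) := by rw [hw]
    _ = u ⬝ᵥ ((M * Y * M) *ᵥ w) := by
        rw [← Matrix.dotProduct_mulVec, Matrix.mulVec_mulVec, Matrix.mulVec_mulVec,
          Matrix.mul_assoc, ← Matrix.mul_assoc]
    _ = u ⬝ᵥ (M *ᵥ w) := by rw [h]
    _ = (u ᵥ* M) ⬝ᵥ w := Matrix.dotProduct_mulVec u M w

/-- If moreover `v ᵥ* M = 1`, then `1 ⬝ᵥ (Y *ᵥ 1) = 1 ⬝ᵥ w`. -/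
lemma key_one {n : Type*} [Fintype n] (M Y : Matrix n n ℚ)
    (h : M * Y * M = M) (v w : n → ℚ) (hv : v ᵥ* M = 1) (hw : M *ᵥ w = 1) :
    (1 : n → ℚ) ⬝ᵥ (Y *ᵥ (1 : n → ℚ)) = (1 : n → ℚ) ⬝ᵥ w := by
  have := key_row M Y h v w hw
  rwa [hv] at this

/-- Hom-sets in the Grothendieck construction as sigma types. -/
def grothHomEquiv {A : Type} [SmallCategory A] (F : A ⥤ Cat) (X Y : Grothendieck F) :
    (X ⟶ Y) ≃ Σ f : X.base ⟶ Y.base, ((F.map f).toFunctor.obj X.fiber ⟶ Y.fiber) where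
  toFun g := ⟨g.base, g.fiber⟩
  invFun p := ⟨p.1, p.2⟩
  left_inv _ := rfl
  right_inv _ := rfl

/-- Objects of the Grothendieck construction as a sigma type. -/
def grothObjEquiv {A : Type} [SmallCategory A] (F : A ⥤ Cat) :
    Grothendieck F ≃ Σ a : A, F.obj a where
  toFun X := ⟨X.base, X.fiber⟩
  invFun p := ⟨p.1, p.2⟩
  left_inv _ := rfl
  right_inv _ := rfl

/-- Let `𝒜` be a finite category and `F : 𝒜 → Cat` a functor with each `F(a)`
a finite category. Assume `[G(F)]` has a coweighting, `[𝒜]` has a weighting, and each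
`[F(a)]` has both a weighting and a coweighting. Then
`χ(G(F)) = Σ_a λ(a)·χ(F(a))` where `λ = [𝒜]⁺·1`; here `χ(𝒞) = 1ᵀ·[𝒞]⁺·1` and `Y_?` denote
the Moore–Penrose inverses of the respective adjacency matrices. -/
theorem chi_grothendieck (A : Type) [SmallCategory A] [Fintype A]
    [∀ a a' : A, Finite (a ⟶ a')] (F : A ⥤ Cat)
    [∀ a : A, Fintype (F.obj a)] [∀ (a : A) (x y : F.obj a), Finite (x ⟶ y)]
    [Fintype (Grothendieck F)]
    (YG : Matrix (Grothendieck F) (Grothendieck F) ℚ) (hYG : IsMoorePenrose (gadjMat F) YG)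
    (YA : Matrix A A ℚ) (hYA : IsMoorePenrose (adjMat A) YA)
    (YF : ∀ a : A, Matrix (F.obj a) (F.obj a) ℚ)
    (hYF : ∀ a : A, IsMoorePenrose (adjMat (F.obj a)) (YF a))
    (cg : Grothendieck F → ℚ) (hcg : cg ᵥ* gadjMat F = 1)
    (wA : A → ℚ) (hwA : adjMat A *ᵥ wA = 1)
    (wF : ∀ a : A, F.obj a → ℚ) (hwF : ∀ a : A, adjMat (F.obj a) *ᵥ wF a = 1)
    (vF : ∀ a : A, F.obj a → ℚ) (hvF : ∀ a : A, vF a ᵥ* adjMat (F.obj a) = 1) :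
    (1 : Grothendieck F → ℚ) ⬝ᵥ (YG *ᵥ (1 : Grothendieck F → ℚ)) =
      ∑ a : A, (YA *ᵥ (1 : A → ℚ)) a *
        ((1 : F.obj a → ℚ) ⬝ᵥ (YF a *ᵥ (1 : F.obj a → ℚ))) := by
  classical
  letI instH : ∀ a a' : A, Fintype (a ⟶ a') := fun _ _ => Fintype.ofFinite _
  letI instFH : ∀ (a : A) (x y : F.obj a), Fintype (x ⟶ y) := fun _ _ _ => Fintype.ofFinite _
  -- expand the adjacency matrix of the Grothendieck construction
  have hG : ∀ X Y : Grothendieck F, gadjMat F X Y =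
      ∑ f : X.base ⟶ Y.base,
        (Nat.card ((F.map f).toFunctor.obj X.fiber ⟶ Y.fiber) : ℚ) := by
    intro X Y
    have h1 : Nat.card (X ⟶ Y) =
        ∑ f : X.base ⟶ Y.base, Nat.card ((F.map f).toFunctor.obj X.fiber ⟶ Y.fiber) := by
      rw [Nat.card_congr (grothHomEquiv F X Y)]
      simp [Nat.card_eq_fintype_card, Fintype.card_sigma]
    simp only [gadjMat, h1, Nat.cast_sum]
  -- weighting on the fibers, pointwise form
  have hwF' : ∀ (a : A) (y : F.obj a),
      ∑ x : F.obj a, (Nat.card (y ⟶ x) : ℚ) * wF a x = 1 := by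
    intro a y
    have := congrFun (hwF a) y
    simpa [Matrix.mulVec, dotProduct, adjMat] using this
  -- summing a column of the Grothendieck adjacency matrix against a fiber weighting
  have hGrow : ∀ (a : A) (x : F.obj a) (a' : A),
      ∑ x' : F.obj a', gadjMat F ⟨a, x⟩ ⟨a', x'⟩ * wF a' x' = (Nat.card (a ⟶ a') : ℚ) := by
    intro a x a'
    simp only [hG]
    calc ∑ x' : F.obj a', (∑ f : a ⟶ a',
            (Nat.card ((F.map f).toFunctor.obj x ⟶ x') : ℚ)) * wF a' x'
        = ∑ x' : F.obj a', ∑ f : a ⟶ a',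
            (Nat.card ((F.map f).toFunctor.obj x ⟶ x') : ℚ) * wF a' x' :=
          Finset.sum_congr rfl fun x' _ => Finset.sum_mul _ _ _
      _ = ∑ f : a ⟶ a', ∑ x' : F.obj a',
            (Nat.card ((F.map f).toFunctor.obj x ⟶ x') : ℚ) * wF a' x' := Finset.sum_comm
      _ = ∑ _f : a ⟶ a', (1 : ℚ) := Finset.sum_congr rfl fun f _ => hwF' a' _
      _ = (Nat.card (a ⟶ a') : ℚ) := by simp [Nat.card_eq_fintype_card]
  -- sum over Grothendieck F via the sigma equivalence
  have sumG : ∀ g : Grothendieck F → ℚ,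
      ∑ X : Grothendieck F, g X = ∑ a : A, ∑ x : F.obj a, g ⟨a, x⟩ := by
    intro g
    rw [← Equiv.sum_comp (grothObjEquiv F).symm g, ← Finset.univ_sigma_univ, Finset.sum_sigma]
    rfl
  -- the combined weighting on G(F)
  set wG : Grothendieck F → ℚ := fun X => wA X.base * wF X.base X.fiber with hwGdef
  have hwG : gadjMat F *ᵥ wG = 1 := by
    funext X
    calc (gadjMat F *ᵥ wG) X = ∑ Y : Grothendieck F, gadjMat F X Y * wG Y := rfl
      _ = ∑ a : A, ∑ x : F.obj a, gadjMat F X ⟨a, x⟩ * (wA a * wF a x) :=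
          sumG (fun Y => gadjMat F X Y * wG Y)
      _ = ∑ a : A, (Nat.card (X.base ⟶ a) : ℚ) * wA a := by
          refine Finset.sum_congr rfl fun a _ => ?_
          simp_rw [mul_left_comm]
          rw [← Finset.mul_sum, hGrow X.base X.fiber a, mul_comm]
      _ = 1 := by
          have := congrFun hwA X.base
          simpa [Matrix.mulVec, dotProduct, adjMat] using this
  -- the row vector a ↦ ∑ x, wF a x is in the row space of adjMat A
  set u : A → ℚ := fun a => ∑ x : F.obj a, cg ⟨a, x⟩ with hudef
  have hc : ∀ a' : A, (u ᵥ* adjMat A) a' = ∑ x' : F.obj a', wF a' x' := by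
    intro a'
    calc (u ᵥ* adjMat A) a'
        = ∑ a : A, (∑ x : F.obj a, cg ⟨a, x⟩) * (Nat.card (a ⟶ a') : ℚ) := rfl
      _ = ∑ a : A, ∑ x : F.obj a, cg ⟨a, x⟩ *
            (∑ x' : F.obj a', gadjMat F ⟨a, x⟩ ⟨a', x'⟩ * wF a' x') := by
          refine Finset.sum_congr rfl fun a _ => ?_
          rw [Finset.sum_mul]
          exact Finset.sum_congr rfl fun x _ => by rw [hGrow a x a']
      _ = ∑ x' : F.obj a', (∑ a : A, ∑ x : F.obj a,
            cg ⟨a, x⟩ * gadjMat F ⟨a, x⟩ ⟨a', x'⟩) * wF a' x' := by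
          simp_rw [Finset.mul_sum, Finset.sum_mul, mul_assoc]
          exact (Finset.sum_congr rfl fun a _ => Finset.sum_comm).trans Finset.sum_comm
      _ = ∑ x' : F.obj a', (cg ᵥ* gadjMat F) ⟨a', x'⟩ * wF a' x' := by
          refine Finset.sum_congr rfl fun x' _ => ?_
          rw [show (cg ᵥ* gadjMat F) ⟨a', x'⟩
              = ∑ X : Grothendieck F, cg X * gadjMat F X ⟨a', x'⟩ from rfl,
            sumG (fun X => cg X * gadjMat F X ⟨a', x'⟩)]
      _ = ∑ x' : F.obj a', wF a' x' := by rw [hcg]; simp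
  -- the Euler measure of each fiber is the total fiber weight
  have chiF : ∀ a : A, (1 : F.obj a → ℚ) ⬝ᵥ (YF a *ᵥ (1 : F.obj a → ℚ)) =
      ∑ x : F.obj a, wF a x := by
    intro a
    rw [key_one _ _ (hYF a).1 (vF a) (wF a) (hvF a) (hwF a)]
    simp [dotProduct]
  -- now put everything together
  have lhs : (1 : Grothendieck F → ℚ) ⬝ᵥ (YG *ᵥ (1 : Grothendieck F → ℚ)) =
      ∑ a : A, (∑ x : F.obj a, wF a x) * wA a := by
    rw [key_one _ _ hYG.1 cg wG hcg hwG]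
    rw [show (1 : Grothendieck F → ℚ) ⬝ᵥ wG = ∑ X : Grothendieck F, wG X by
      simp [dotProduct], sumG wG]
    refine Finset.sum_congr rfl fun a _ => ?_
    simp only [hwGdef]
    rw [← Finset.mul_sum, mul_comm]
  have rhs : ∑ a : A, (YA *ᵥ (1 : A → ℚ)) a *
      ((1 : F.obj a → ℚ) ⬝ᵥ (YF a *ᵥ (1 : F.obj a → ℚ))) =
      ∑ a : A, (∑ x : F.obj a, wF a x) * wA a := by
    have h1 : (fun a => ∑ x : F.obj a, wF a x) = u ᵥ* adjMat A := by
      funext a; exact (hc a).symm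
    calc ∑ a : A, (YA *ᵥ (1 : A → ℚ)) a *
          ((1 : F.obj a → ℚ) ⬝ᵥ (YF a *ᵥ (1 : F.obj a → ℚ)))
        = ∑ a : A, (∑ x : F.obj a, wF a x) * (YA *ᵥ (1 : A → ℚ)) a := by
          refine Finset.sum_congr rfl fun a _ => ?_
          rw [chiF a, mul_comm]
      _ = (u ᵥ* adjMat A) ⬝ᵥ (YA *ᵥ (1 : A → ℚ)) := by
          rw [← h1]; rfl
      _ = (u ᵥ* adjMat A) ⬝ᵥ wA := key_row _ _ hYA.1 u wA hwA
      _ = ∑ a : A, (∑ x : F.obj a, wF a x) * wA a := by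
          rw [← h1]; rfl
  rw [lhs, rhs]
end

section
/- Let 𝒜 be a finite partially ordered set, regarded as a category, with objects a₁,…,a_m, and let F : 𝒜 → Cat be a functor such that each F(aᵢ) is a finite category whose adjacency matrix [F(aᵢ)] has a weighting. Then χ(G(F)) = Σᵢ λᵢ·χ(F(aᵢ)), where (λ₁,…,λ_m) = [𝒜]⁻¹·1; that is, χ(G(F)) = χ(F)·[𝒜]⁺·1 where χ(F) is the row vector (χ(F(a₁)),…,χ(F(a_m))). -/
open Matrix CategoryTheory

set_option linter.unusedSectionVars false

section
variable {A : Type} [PartialOrder A] [Fintype A] [DecidableEq A]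

open Classical in
lemma adjA_apply (a a' : A) : adjMat A a a' = if a ≤ a' then 1 else 0 := by
  unfold adjMat
  by_cases h : a ≤ a'
  · have : Nonempty (a ⟶ a') := ⟨homOfLE h⟩
    rw [if_pos h, Nat.card_unique, Nat.cast_one]
  · have : IsEmpty (a ⟶ a') := ⟨fun f => h (leOfHom f)⟩
    rw [if_neg h, Nat.card_of_isEmpty, Nat.cast_zero]

variable (F : A ⥤ Cat) [∀ a : A, Fintype (F.obj a)] [Fintype (Grothendieck F)]

lemma gadj_apply_le {a a' : A} (h : a ≤ a') (x : F.obj a) (x' : F.obj a') :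
    gadjMat F ⟨a, x⟩ ⟨a', x'⟩ = adjMat (F.obj a') ((F.map (homOfLE h)).toFunctor.obj x) x' := by
  unfold gadjMat adjMat
  congr 1
  exact Nat.card_congr
    { toFun := fun g => eqToHom (by rw [Subsingleton.elim (homOfLE h) g.base]) ≫ g.fiber
      invFun := fun η => ⟨homOfLE h, η⟩
      left_inv := fun g => by
        obtain ⟨gb, gf⟩ := g
        obtain rfl : homOfLE h = gb := Subsingleton.elim _ _
        simp
      right_inv := fun η => by simp }

lemma gadj_apply_not_le {a a' : A} (h : ¬ a ≤ a') (x : F.obj a) (x' : F.obj a') :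
    gadjMat F ⟨a, x⟩ ⟨a', x'⟩ = 0 := by
  unfold gadjMat
  have : IsEmpty (Grothendieck.mk a x ⟶ Grothendieck.mk a' x') :=
    ⟨fun g => h (leOfHom g.base)⟩
  rw [Nat.card_of_isEmpty, Nat.cast_zero]

lemma sum_groth (t : Grothendieck F → ℚ) :
    ∑ X : Grothendieck F, t X = ∑ a : A, ∑ x : F.obj a, t ⟨a, x⟩ := by
  classical
  rw [← Equiv.sum_comp (⟨fun p => ⟨p.1, p.2⟩, fun X => ⟨X.base, X.fiber⟩,
      fun _ => rfl, fun _ => rfl⟩ : (Σ a : A, F.obj a) ≃ Grothendieck F) t,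
    ← Finset.univ_sigma_univ, Finset.sum_sigma]
  rfl

open Classical in
lemma gadj_mulVec (t : Grothendieck F → ℚ) (a : A) (x : F.obj a) :
    (gadjMat F *ᵥ t) ⟨a, x⟩ =
      ∑ a' : A, if h : a ≤ a' then
        (adjMat (F.obj a') *ᵥ fun x' => t ⟨a', x'⟩) ((F.map (homOfLE h)).toFunctor.obj x) else 0 := by
  show ∑ Y : Grothendieck F, gadjMat F ⟨a, x⟩ Y * t Y = _
  rw [sum_groth F (fun Y => gadjMat F ⟨a, x⟩ Y * t Y)]
  refine Finset.sum_congr rfl fun a' _ => ?_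
  by_cases h : a ≤ a'
  · rw [dif_pos h]
    show _ = ∑ x' : F.obj a', adjMat (F.obj a') ((F.map (homOfLE h)).toFunctor.obj x) x' * t ⟨a', x'⟩
    exact Finset.sum_congr rfl fun x' _ => by rw [gadj_apply_le F h x x']
  · rw [dif_neg h]
    exact Finset.sum_eq_zero fun x' _ => by rw [gadj_apply_not_le F h x x', zero_mul]

open Classical in
lemma gadj_mulVec_const (t : Grothendieck F → ℚ) (c : A → ℚ)
    (hc : ∀ a : A, adjMat (F.obj a) *ᵥ (fun x => t ⟨a, x⟩) = c a • 1) :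
    gadjMat F *ᵥ t = fun X => (adjMat A *ᵥ c) X.base := by
  funext X
  obtain ⟨a, x⟩ := X
  rw [gadj_mulVec]
  show _ = ∑ a' : A, adjMat A a a' * c a'
  refine Finset.sum_congr rfl fun a' _ => ?_
  rw [adjA_apply]
  by_cases h : a ≤ a'
  · rw [dif_pos h, if_pos h, one_mul, hc a']
    simp
  · rw [dif_neg h, if_neg h, zero_mul]

open Classical in
lemma block_eq_zero (d : Grothendieck F → ℚ) (hd : gadjMat F *ᵥ d = 0) :
    ∀ a : A, adjMat (F.obj a) *ᵥ (fun x => d ⟨a, x⟩) = 0 := by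
  intro a
  refine (wellFounded_gt (α := A)).induction
    (C := fun b => (adjMat (F.obj b) *ᵥ fun x => d ⟨b, x⟩) = 0) a ?_
  intro a IH
  funext x
  have h0 := congrFun hd ⟨a, x⟩
  rw [gadj_mulVec] at h0
  rw [← Finset.add_sum_erase Finset.univ _ (Finset.mem_univ a)] at h0
  have hrest : ∑ a' ∈ Finset.univ.erase a,
      (if h : a ≤ a' then
        (adjMat (F.obj a') *ᵥ fun x' => d ⟨a', x'⟩) ((F.map (homOfLE h)).toFunctor.obj x) else 0) = 0 := by
    refine Finset.sum_eq_zero fun a' ha' => ?_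
    by_cases h : a ≤ a'
    · rw [dif_pos h, IH a' (lt_of_le_of_ne h (Ne.symm (Finset.ne_of_mem_erase ha')))]
      simp
    · rw [dif_neg h]
  rw [hrest, add_zero, dif_pos (le_refl a)] at h0
  have hid : F.map (homOfLE (le_refl a)) = 𝟙 (F.obj a) := by
    rw [show homOfLE (le_refl a) = 𝟙 a from Subsingleton.elim _ _, F.map_id]
  rw [hid] at h0
  exact h0

lemma adjA_det_ne_zero : (adjMat A).det ≠ 0 := by
  intro hdet
  obtain ⟨v, hv, hMv⟩ := Matrix.exists_mulVec_eq_zero_iff.mpr hdet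
  apply hv
  funext a
  refine (wellFounded_gt (α := A)).induction (C := fun b => v b = (0 : ℚ)) a ?_
  intro a IH
  have h0 := congrFun hMv a
  have hexp : (adjMat A *ᵥ v) a = ∑ a' : A, adjMat A a a' * v a' := rfl
  rw [hexp, ← Finset.add_sum_erase Finset.univ _ (Finset.mem_univ a)] at h0
  have hrest : ∑ a' ∈ Finset.univ.erase a, adjMat A a a' * v a' = 0 := by
    refine Finset.sum_eq_zero fun a' ha' => ?_
    by_cases h : a ≤ a'
    · rw [IH a' (lt_of_le_of_ne h (Ne.symm (Finset.ne_of_mem_erase ha'))), mul_zero]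
    · rw [adjA_apply, if_neg h, zero_mul]
  rw [hrest, add_zero, adjA_apply, if_pos (le_refl a), one_mul] at h0
  exact h0

lemma adjA_inv_weighting : adjMat A *ᵥ ((adjMat A)⁻¹ *ᵥ (1 : A → ℚ)) = 1 := by
  rw [mulVec_mulVec, Matrix.mul_nonsing_inv _ (isUnit_iff_ne_zero.mpr adjA_det_ne_zero),
    one_mulVec]

lemma mulVec_dot {n : Type*} [Fintype n] (M : Matrix n n ℚ) (x y : n → ℚ) :
    (M *ᵥ x) ⬝ᵥ y = x ⬝ᵥ (Mᵀ *ᵥ y) := by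
  rw [dotProduct_mulVec, ← Matrix.vecMul_transpose]

end

/-- Let `𝒜` be a finite poset, regarded as a category, and `F : 𝒜 → Cat` a
functor such that each `F(a)` is a finite category whose adjacency matrix has a weighting.
Then `χ(G(F)) = Σ_a λ(a)·χ(F(a))` where `λ = [𝒜]⁻¹·1`; here `χ(𝒞) = 1ᵀ·[𝒞]⁺·1` with `[𝒞]⁺`
the Moore–Penrose inverse of the adjacency matrix. -/
theorem chi_grothendieck_poset (A : Type) [PartialOrder A] [Fintype A] [DecidableEq A]
    (F : A ⥤ Cat)
    [∀ a : A, Fintype (F.obj a)] [∀ (a : A) (x y : F.obj a), Finite (x ⟶ y)]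
    [Fintype (Grothendieck F)]
    (wF : ∀ a : A, F.obj a → ℚ) (hwF : ∀ a : A, adjMat (F.obj a) *ᵥ wF a = 1)
    (YG : Matrix (Grothendieck F) (Grothendieck F) ℚ) (hYG : IsMoorePenrose (gadjMat F) YG)
    (YF : ∀ a : A, Matrix (F.obj a) (F.obj a) ℚ)
    (hYF : ∀ a : A, IsMoorePenrose (adjMat (F.obj a)) (YF a)) :
    (1 : Grothendieck F → ℚ) ⬝ᵥ (YG *ᵥ (1 : Grothendieck F → ℚ)) =
      ∑ a : A, ((adjMat A)⁻¹ *ᵥ (1 : A → ℚ)) a *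
        ((1 : F.obj a → ℚ) ⬝ᵥ (YF a *ᵥ (1 : F.obj a → ℚ))) := by
  classical
  obtain ⟨hG1, hG2, hG3, hG4⟩ := hYG
  set lam : A → ℚ := (adjMat A)⁻¹ *ᵥ (1 : A → ℚ) with hlam
  have hAlam : adjMat A *ᵥ lam = 1 := adjA_inv_weighting
  -- the weighting coming from the wF's
  set v : Grothendieck F → ℚ := fun X => lam X.base * wF X.base X.fiber with hv
  have hGv : gadjMat F *ᵥ v = 1 := by
    rw [gadj_mulVec_const F v lam (fun a => by
      have : (fun x => v ⟨a, x⟩) = lam a • wF a := by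
        funext x; simp [hv, Pi.smul_apply, smul_eq_mul]
      rw [this, mulVec_smul, hwF a])]
    funext X
    rw [hAlam]
    rfl
  set u : Grothendieck F → ℚ := YG *ᵥ (1 : Grothendieck F → ℚ) with hu
  have hGu : gadjMat F *ᵥ u = 1 := by
    rw [hu, ← hGv, mulVec_mulVec, mulVec_mulVec, hG1]
  -- the candidate weighting built from the Moore-Penrose inverses of the fibers
  set xv : Grothendieck F → ℚ := fun X => lam X.base * (YF X.base *ᵥ 1) X.fiber with hxv
  have hMxv : ∀ a : A, adjMat (F.obj a) *ᵥ (fun z => xv ⟨a, z⟩) = lam a • 1 := by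
    intro a
    have h1 : adjMat (F.obj a) *ᵥ (YF a *ᵥ (1 : F.obj a → ℚ)) = 1 := by
      conv_lhs => rw [← hwF a]
      rw [mulVec_mulVec, mulVec_mulVec, (hYF a).1, hwF a]
    have : (fun z => xv ⟨a, z⟩) = lam a • (YF a *ᵥ (1 : F.obj a → ℚ)) := by
      funext z; simp [hxv, Pi.smul_apply, smul_eq_mul]
    rw [this, mulVec_smul, h1]
  have hGxv : gadjMat F *ᵥ xv = 1 := by
    rw [gadj_mulVec_const F xv lam hMxv]
    funext X
    rw [hAlam]
    rfl
  -- the difference is a null vector of every block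
  set d : Grothendieck F → ℚ := u - xv with hd
  have hGd : gadjMat F *ᵥ d = 0 := by
    rw [hd, mulVec_sub, hGu, hGxv, sub_self]
  have hblk : ∀ a : A, adjMat (F.obj a) *ᵥ (fun z => d ⟨a, z⟩) = 0 :=
    block_eq_zero F d hGd
  -- u ⬝ d = 0
  have hud : u ⬝ᵥ d = 0 := by
    have h2 : (YG * gadjMat F) *ᵥ u = u := by
      rw [← mulVec_mulVec, hGu, hu]
    calc u ⬝ᵥ d = ((YG * gadjMat F) *ᵥ u) ⬝ᵥ d := by rw [h2]
      _ = u ⬝ᵥ ((YG * gadjMat F)ᵀ *ᵥ d) := mulVec_dot _ _ _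
      _ = u ⬝ᵥ ((YG * gadjMat F) *ᵥ d) := by rw [hG3]
      _ = 0 := by rw [← mulVec_mulVec, hGd, mulVec_zero, dotProduct_zero]
  -- xv ⬝ d = 0
  have hxd : xv ⬝ᵥ d = 0 := by
    have hsplit : xv ⬝ᵥ d = ∑ a : A, (fun z => xv ⟨a, z⟩) ⬝ᵥ (fun z => d ⟨a, z⟩) := by
      rw [show xv ⬝ᵥ d = ∑ X : Grothendieck F, xv X * d X from rfl,
        sum_groth F (fun X => xv X * d X)]
      rfl
    rw [hsplit]
    refine Finset.sum_eq_zero fun a _ => ?_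
    have hfix : (YF a * adjMat (F.obj a)) *ᵥ (fun z => xv ⟨a, z⟩) = fun z => xv ⟨a, z⟩ := by
      rw [← mulVec_mulVec, hMxv a, mulVec_smul]
      have h1 : YF a *ᵥ (1 : F.obj a → ℚ) = fun z => (YF a *ᵥ 1) z := rfl
      funext z
      simp [hxv, Pi.smul_apply, smul_eq_mul]
    calc (fun z => xv ⟨a, z⟩) ⬝ᵥ (fun z => d ⟨a, z⟩)
        = ((YF a * adjMat (F.obj a)) *ᵥ (fun z => xv ⟨a, z⟩)) ⬝ᵥ (fun z => d ⟨a, z⟩) := by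
          rw [hfix]
      _ = (fun z => xv ⟨a, z⟩) ⬝ᵥ ((YF a * adjMat (F.obj a))ᵀ *ᵥ (fun z => d ⟨a, z⟩)) :=
          mulVec_dot _ _ _
      _ = (fun z => xv ⟨a, z⟩) ⬝ᵥ ((YF a * adjMat (F.obj a)) *ᵥ (fun z => d ⟨a, z⟩)) := by
          rw [(hYF a).2.2.1]
      _ = 0 := by rw [← mulVec_mulVec, hblk a, mulVec_zero, dotProduct_zero]
  -- hence d = 0
  have hdd : d ⬝ᵥ d = 0 := by
    rw [hd, sub_dotProduct, ← hd, hud, hxd, sub_zero]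
  have hd0 : d = 0 := by
    funext X
    have hnn : ∀ Y : Grothendieck F, 0 ≤ d Y * d Y := fun Y => mul_self_nonneg _
    have := (Finset.sum_eq_zero_iff_of_nonneg (fun Y _ => hnn Y)).mp hdd X (Finset.mem_univ X)
    exact mul_self_eq_zero.mp this
  have hux : u = xv := by
    have := sub_eq_zero.mp hd0
    exact this
  -- conclude
  calc (1 : Grothendieck F → ℚ) ⬝ᵥ (YG *ᵥ (1 : Grothendieck F → ℚ))
      = ∑ X : Grothendieck F, u X := by
        rw [hu]; simp [dotProduct]
    _ = ∑ X : Grothendieck F, xv X := by rw [hux]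
    _ = ∑ a : A, ∑ z : F.obj a, xv ⟨a, z⟩ := sum_groth F xv
    _ = ∑ a : A, lam a * ((1 : F.obj a → ℚ) ⬝ᵥ (YF a *ᵥ (1 : F.obj a → ℚ))) := by
        refine Finset.sum_congr rfl fun a _ => ?_
        simp [hxv, dotProduct, Finset.mul_sum]
end

section
/- Let 𝒜 and ℬ be finite categories. Then the adjacency matrix of the product category satisfies [𝒜 × ℬ] = [𝒜] ⊗ [ℬ] (Kronecker product), and the Euler measure is multiplicative: χ(𝒜 × ℬ) = χ(𝒜)·χ(ℬ), i.e., 1ᵀ·[𝒜 × ℬ]⁺·1 = (1ᵀ·[𝒜]⁺·1)·(1ᵀ·[ℬ]⁺·1). -/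
/-!
Hom-sets of `𝒜 × ℬ` are products, so `[𝒜 × ℬ] = [𝒜] ⊗ [ℬ]`. By the mixed-product rule the four
Penrose equations for `[𝒜]⁺ ⊗ [ℬ]⁺` against `[𝒜] ⊗ [ℬ]` split into those of the factors, so by
uniqueness `[𝒜 × ℬ]⁺ = [𝒜]⁺ ⊗ [ℬ]⁺`; finally the sum of all entries of a Kronecker product is the
product of the entry sums.
-/

open Matrix CategoryTheory
open scoped Kronecker

namespace IsMoorePenrose

variable {m n : Type*} [Fintype m] [Fintype n]

theorem unique {M : Matrix m n ℚ} {Y Z : Matrix n m ℚ}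
    (hY : IsMoorePenrose M Y) (hZ : IsMoorePenrose M Z) : Y = Z := by
  obtain ⟨hY1, hY2, hY3, hY4⟩ := hY
  obtain ⟨hZ1, hZ2, hZ3, hZ4⟩ := hZ
  have hMY : M * Y = M * Z := by
    calc M * Y = (M * Y)ᵀ := hY4.symm
      _ = Yᵀ * (M * Z * M)ᵀ := by rw [hZ1, transpose_mul]
      _ = Yᵀ * (Mᵀ * (M * Z)ᵀ) := by rw [transpose_mul]
      _ = (M * Y)ᵀ * (M * Z) := by rw [hZ4, transpose_mul]; simp only [Matrix.mul_assoc]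
      _ = M * Y * M * Z := by rw [hY4]; simp only [Matrix.mul_assoc]
      _ = M * Z := by rw [hY1]
  have hYM : Y * M = Z * M := by
    calc Y * M = (Y * M)ᵀ := hY3.symm
      _ = (M * Z * M)ᵀ * Yᵀ := by rw [hZ1, transpose_mul]
      _ = (Z * M)ᵀ * Mᵀ * Yᵀ := by simp only [transpose_mul, Matrix.mul_assoc]
      _ = Z * M * (Y * M)ᵀ := by rw [hZ3, transpose_mul]; simp only [Matrix.mul_assoc]
      _ = Z * (M * Y * M) := by rw [hY3]; simp only [Matrix.mul_assoc]
      _ = Z * M := by rw [hY1]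
  calc Y = Y * M * Y := hY2.symm
    _ = Y * (M * Z) := by rw [← hMY]; simp only [Matrix.mul_assoc]
    _ = Z * M * Z := by rw [← Matrix.mul_assoc, hYM]
    _ = Z := hZ2

theorem kronecker {p q : Type*} [Fintype p] [Fintype q]
    {M : Matrix m n ℚ} {Y : Matrix n m ℚ} {N : Matrix p q ℚ} {Z : Matrix q p ℚ}
    (hY : IsMoorePenrose M Y) (hZ : IsMoorePenrose N Z) :
    IsMoorePenrose (M ⊗ₖ N) (Y ⊗ₖ Z) := by
  obtain ⟨hY1, hY2, hY3, hY4⟩ := hY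
  obtain ⟨hZ1, hZ2, hZ3, hZ4⟩ := hZ
  simp only [IsMoorePenrose, ← mul_kronecker_mul, ← kroneckerMap_transpose]
  exact ⟨by rw [hY1, hZ1], by rw [hY2, hZ2], by rw [hY3, hZ3], by rw [hY4, hZ4]⟩

end IsMoorePenrose

theorem adjMat_prod (A B : Type*) [SmallCategory A] [SmallCategory B] [Fintype A] [Fintype B] :
    adjMat (A × B) = adjMat A ⊗ₖ adjMat B := by
  ext ⟨a, b⟩ ⟨a', b'⟩
  change ((Nat.card ((a ⟶ a') × (b ⟶ b')) : ℚ)) = Nat.card (a ⟶ a') * Nat.card (b ⟶ b')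
  rw [Nat.card_prod, Nat.cast_mul]

section KroneckerProductVectors

variable {R : Type*} [CommSemiring R] {l m n p : Type*} [Fintype m] [Fintype p]

theorem kronecker_mulVec_mul (Y : Matrix l m R) (Z : Matrix n p R) (u : m → R) (v : p → R) :
    (Y ⊗ₖ Z) *ᵥ (fun x : m × p => u x.1 * v x.2) = fun x => (Y *ᵥ u) x.1 * (Z *ᵥ v) x.2 := by
  ext ⟨i, j⟩
  simp only [mulVec, dotProduct, kroneckerMap_apply, Fintype.sum_prod_type, Fintype.sum_mul_sum]
  exact Finset.sum_congr rfl fun _ _ => Finset.sum_congr rfl fun _ _ => by ring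

theorem dotProduct_mul_mul (u x : m → R) (v y : p → R) :
    (fun i : m × p => u i.1 * v i.2) ⬝ᵥ (fun i => x i.1 * y i.2) = (u ⬝ᵥ x) * (v ⬝ᵥ y) := by
  simp only [dotProduct, Fintype.sum_prod_type, Fintype.sum_mul_sum]
  exact Finset.sum_congr rfl fun _ _ => Finset.sum_congr rfl fun _ _ => by ring

theorem one_dotProduct_kronecker_mulVec_one (Y : Matrix m m R) (Z : Matrix p p R) :
    (1 : m × p → R) ⬝ᵥ ((Y ⊗ₖ Z) *ᵥ 1) = ((1 : m → R) ⬝ᵥ (Y *ᵥ 1)) * ((1 : p → R) ⬝ᵥ (Z *ᵥ 1)) := by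
  have one_eq : (1 : m × p → R) = fun x => (1 : m → R) x.1 * (1 : p → R) x.2 := by
    ext; simp
  rw [one_eq, kronecker_mulVec_mul, dotProduct_mul_mul]

end KroneckerProductVectors

/-- For finite categories `𝒜` and `ℬ`, the adjacency matrix of the product
category is the Kronecker product `[𝒜 × ℬ] = [𝒜] ⊗ [ℬ]`, and the Euler measure is
multiplicative: `1ᵀ·[𝒜 × ℬ]⁺·1 = (1ᵀ·[𝒜]⁺·1)·(1ᵀ·[ℬ]⁺·1)`. -/
theorem chi_prod (A B : Type) [SmallCategory A] [SmallCategory B]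
    [Fintype A] [Fintype B]
    [∀ a a' : A, Finite (a ⟶ a')] [∀ b b' : B, Finite (b ⟶ b')]
    (YA : Matrix A A ℚ) (hYA : IsMoorePenrose (adjMat A) YA)
    (YB : Matrix B B ℚ) (hYB : IsMoorePenrose (adjMat B) YB)
    (YAB : Matrix (A × B) (A × B) ℚ) (hYAB : IsMoorePenrose (adjMat (A × B)) YAB) :
    adjMat (A × B) = adjMat A ⊗ₖ adjMat B ∧
      (1 : A × B → ℚ) ⬝ᵥ (YAB *ᵥ (1 : A × B → ℚ)) =
        ((1 : A → ℚ) ⬝ᵥ (YA *ᵥ (1 : A → ℚ))) * ((1 : B → ℚ) ⬝ᵥ (YB *ᵥ (1 : B → ℚ))) := by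
  have hYAB_eq : YAB = YA ⊗ₖ YB :=
    hYAB.unique (adjMat_prod A B ▸ hYA.kronecker hYB)
  exact ⟨adjMat_prod A B, hYAB_eq ▸ one_dotProduct_kronecker_mulVec_one YA YB⟩
end

section
/- Let 𝒜 and ℬ be finite categories. Then the Euler measure is additive under disjoint union: χ(𝒜 ⊔ ℬ) = χ(𝒜) + χ(ℬ), i.e., 1ᵀ·[𝒜 ⊔ ℬ]⁺·1 = 1ᵀ·[𝒜]⁺·1 + 1ᵀ·[ℬ]⁺·1, where [𝒜 ⊔ ℬ] is the block diagonal matrix diag([𝒜],[ℬ]). -/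
open Matrix CategoryTheory

/-- Uniqueness of the Moore–Penrose inverse. -/
theorem mp_unique {n : Type*} [Fintype n] (M Y Z : Matrix n n ℚ)
    (hY : IsMoorePenrose M Y) (hZ : IsMoorePenrose M Z) : Y = Z := by
  obtain ⟨hY1, hY2, hY3, hY4⟩ := hY
  obtain ⟨hZ1, hZ2, hZ3, hZ4⟩ := hZ
  have hMY : M * Y = M * Z := by
    calc M * Y = (M * Z * M) * Y := by rw [hZ1]
      _ = (M * Z)ᵀ * (M * Y)ᵀ := by rw [hZ4, hY4, mul_assoc]
      _ = Zᵀ * (M * Y * M)ᵀ := by simp only [transpose_mul, mul_assoc]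
      _ = Zᵀ * Mᵀ := by rw [hY1]
      _ = (M * Z)ᵀ := by rw [transpose_mul]
      _ = M * Z := hZ4
  have hYM : Y * M = Z * M := by
    calc Y * M = Y * (M * Z * M) := by rw [hZ1]
      _ = (Y * M)ᵀ * (Z * M)ᵀ := by rw [hZ3, hY3]; simp only [mul_assoc]
      _ = (M * Y * M)ᵀ * Zᵀ := by simp only [transpose_mul, mul_assoc]
      _ = Mᵀ * Zᵀ := by rw [hY1]
      _ = (Z * M)ᵀ := by rw [transpose_mul]
      _ = Z * M := hZ3
  calc Y = Y * M * Y := hY2.symm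
    _ = Y * (M * Z) := by rw [← hMY, mul_assoc]
    _ = (Z * M) * Z := by rw [← mul_assoc, hYM]
    _ = Z := hZ2

/-- For finite categories `𝒜` and `ℬ`, the adjacency matrix of the disjoint
union `𝒜 ⊔ ℬ` is the block diagonal matrix `diag([𝒜],[ℬ])`, and the Euler measure is
additive: `1ᵀ·[𝒜 ⊔ ℬ]⁺·1 = 1ᵀ·[𝒜]⁺·1 + 1ᵀ·[ℬ]⁺·1`. -/
theorem chi_disjoint_union (A B : Type) [SmallCategory A] [SmallCategory B]
    [Fintype A] [Fintype B]
    [∀ a a' : A, Finite (a ⟶ a')] [∀ b b' : B, Finite (b ⟶ b')]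
    (YA : Matrix A A ℚ) (hYA : IsMoorePenrose (adjMat A) YA)
    (YB : Matrix B B ℚ) (hYB : IsMoorePenrose (adjMat B) YB)
    (YAB : Matrix (A ⊕ B) (A ⊕ B) ℚ) (hYAB : IsMoorePenrose (adjMat (A ⊕ B)) YAB) :
    adjMat (A ⊕ B) = Matrix.fromBlocks (adjMat A) 0 0 (adjMat B) ∧
      (1 : A ⊕ B → ℚ) ⬝ᵥ (YAB *ᵥ (1 : A ⊕ B → ℚ)) =
        (1 : A → ℚ) ⬝ᵥ (YA *ᵥ (1 : A → ℚ)) + (1 : B → ℚ) ⬝ᵥ (YB *ᵥ (1 : B → ℚ)) := by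
  have hadj : adjMat (A ⊕ B) = Matrix.fromBlocks (adjMat A) 0 0 (adjMat B) := by
    ext x y
    cases x <;> cases y <;> simp only [adjMat, Matrix.fromBlocks, Sum.elim_inl,
      Sum.elim_inr, Matrix.of_apply, Matrix.zero_apply]
    · norm_cast
      exact Nat.card_congr Equiv.ulift
    · norm_cast
      rw [Nat.card_eq_zero]
      exact Or.inl ⟨fun f => (hom_inl_inr_false _ _ f).elim⟩
    · norm_cast
      rw [Nat.card_eq_zero]
      exact Or.inl ⟨fun f => (hom_inr_inl_false _ _ f).elim⟩
    · norm_cast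
      exact Nat.card_congr Equiv.ulift
  refine ⟨hadj, ?_⟩
  obtain ⟨hA1, hA2, hA3, hA4⟩ := hYA
  obtain ⟨hB1, hB2, hB3, hB4⟩ := hYB
  have hblock : IsMoorePenrose (adjMat (A ⊕ B)) (Matrix.fromBlocks YA 0 0 YB) := by
    rw [hadj]
    refine ⟨?_, ?_, ?_, ?_⟩ <;>
      simp [Matrix.fromBlocks_multiply, Matrix.fromBlocks_transpose,
        hA1, hA2, hA3, hA4, hB1, hB2, hB3, hB4]
  have hY : YAB = Matrix.fromBlocks YA 0 0 YB :=
    mp_unique _ _ _ hYAB hblock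
  rw [hY]
  have h1 : (1 : A ⊕ B → ℚ) = Sum.elim (1 : A → ℚ) (1 : B → ℚ) := by
    funext x; cases x <;> rfl
  rw [h1, Matrix.fromBlocks_mulVec]
  simp [dotProduct, Fintype.sum_sum_type]
end

section
/- Let M be an m×m matrix with rational entries of rank k. Let r₁,…,r_k be row vectors forming a basis of the row space of M, and let s₁,…,s_{m−k} be column vectors forming a basis of the orthogonal complement of the column space of M (equivalently, of the null space of Mᵀ). Then the m×m matrix B whose first k columns are Mr₁ᵀ,…,Mr_kᵀ and whose last m−k columns are s₁,…,s_{m−k} is invertible, and A·B⁻¹ is the Moore–Penrose inverse of M, where A is the m×m matrix whose first k columns are r₁ᵀ,…,r_kᵀ and whose last m−k columns are zero. -/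
open Matrix

theorem mp_sym_helper {m : ℕ} (P : Matrix (Fin m) (Fin m) ℚ)
    (U V : Submodule ℚ (Fin m → ℚ)) (hsup : U ⊔ V = ⊤)
    (hU : ∀ u ∈ U, P *ᵥ u = u) (hV : ∀ v ∈ V, P *ᵥ v = 0)
    (hperp : ∀ u ∈ U, ∀ v ∈ V, u ⬝ᵥ v = 0) : Pᵀ = P := by
  have key : ∀ x y : Fin m → ℚ, (P *ᵥ x) ⬝ᵥ y = x ⬝ᵥ (P *ᵥ y) := by
    intro x y
    obtain ⟨u, hu, v, hv, rfl⟩ :=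
      Submodule.mem_sup.mp (hsup ▸ Submodule.mem_top : x ∈ U ⊔ V)
    obtain ⟨u', hu', v', hv', rfl⟩ :=
      Submodule.mem_sup.mp (hsup ▸ Submodule.mem_top : y ∈ U ⊔ V)
    have h1 : u ⬝ᵥ v' = 0 := hperp _ hu _ hv'
    have h2 : v ⬝ᵥ u' = 0 := by rw [dotProduct_comm]; exact hperp _ hu' _ hv
    simp [mulVec_add, hU _ hu, hV _ hv, hU _ hu', hV _ hv', dotProduct_add,
      add_dotProduct, h1, h2]
  ext i j
  have h := key (Pi.single i 1) (Pi.single j 1)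
  simpa [dotProduct_single, single_dotProduct] using h

theorem mp_ext_helper {m : ℕ} (P Q : Matrix (Fin m) (Fin m) ℚ)
    (h : ∀ x, P *ᵥ x = Q *ᵥ x) : P = Q := by
  ext i j
  have := congrFun (h (Pi.single j 1)) i
  simpa [mulVec_single] using this

/-- Let `M` be an `m×m` rational matrix of rank `k`, let `r₁,…,r_k` be a basis
of the row space of `M` and `s₁,…,s_{m−k}` a basis of the orthogonal complement of the column
space of `M` (i.e. of the null space of `Mᵀ`). Then the matrix `B` with columns
`Mr₁ᵀ,…,Mr_kᵀ,s₁,…,s_{m−k}` is invertible, and `A·B⁻¹` is the Moore–Penrose inverse of `M`,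
where `A` is the matrix with columns `r₁ᵀ,…,r_kᵀ,0,…,0`. -/
theorem moorePenrose_algorithm {m k : ℕ} (hk : k ≤ m) (M : Matrix (Fin m) (Fin m) ℚ)
    (hrank : M.rank = k)
    (r : Fin k → (Fin m → ℚ))
    (hr_indep : LinearIndependent ℚ r)
    (hr_span : Submodule.span ℚ (Set.range r) =
      Submodule.span ℚ (Set.range fun i => M i))
    (s : Fin (m - k) → (Fin m → ℚ))
    (hs_indep : LinearIndependent ℚ s)
    (hs_span : Submodule.span ℚ (Set.range s) = LinearMap.ker (Matrix.mulVecLin Mᵀ)) :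
    (∃ B' : Matrix (Fin k ⊕ Fin (m - k)) (Fin m) ℚ,
        (Matrix.of fun i j => Sum.elim (fun j₁ => (M *ᵥ r j₁) i) (fun j₂ => s j₂ i) j) * B' = 1 ∧
        B' * (Matrix.of fun i j => Sum.elim (fun j₁ => (M *ᵥ r j₁) i) (fun j₂ => s j₂ i) j) = 1) ∧
      ∀ B' : Matrix (Fin k ⊕ Fin (m - k)) (Fin m) ℚ,
        (Matrix.of fun i j => Sum.elim (fun j₁ => (M *ᵥ r j₁) i) (fun j₂ => s j₂ i) j) * B' = 1 →
        B' * (Matrix.of fun i j => Sum.elim (fun j₁ => (M *ᵥ r j₁) i) (fun j₂ => s j₂ i) j) = 1 →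
        IsMoorePenrose M
          ((Matrix.of fun i j => Sum.elim (fun j₁ => r j₁ i) (fun _ => 0) j) * B') := by
  classical
  set c : Fin k ⊕ Fin (m - k) → (Fin m → ℚ) :=
    Sum.elim (fun i => M *ᵥ r i) s with hc
  set B : Matrix (Fin m) (Fin k ⊕ Fin (m - k)) ℚ :=
    Matrix.of fun i j => Sum.elim (fun j₁ => (M *ᵥ r j₁) i) (fun j₂ => s j₂ i) j with hBdef
  -- basic orthogonality facts
  have hMs : ∀ j, Mᵀ *ᵥ s j = 0 := by
    intro j
    have : s j ∈ LinearMap.ker (Matrix.mulVecLin Mᵀ) :=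
      hs_span ▸ Submodule.subset_span (Set.mem_range_self j)
    simpa only [LinearMap.mem_ker, Matrix.mulVecLin_apply] using this
  have horth1 : ∀ (x w : Fin m → ℚ), Mᵀ *ᵥ w = 0 → (M *ᵥ x) ⬝ᵥ w = 0 := by
    intro x w hw
    rw [dotProduct_comm, dotProduct_mulVec, ← mulVec_transpose, hw, zero_dotProduct]
  have hrow : ∀ u ∈ Submodule.span ℚ (Set.range fun i => M i),
      ∀ w, M *ᵥ w = 0 → u ⬝ᵥ w = 0 := by
    intro u hu w hw
    induction hu using Submodule.span_induction with
    | mem x hx =>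
        obtain ⟨i, rfl⟩ := hx
        have : (M *ᵥ w) i = 0 := by rw [hw]; rfl
        simpa [Matrix.mulVec, dotProduct] using this
    | zero => simp
    | add x y hx hy ihx ihy => simp [add_dotProduct, ihx, ihy]
    | smul a x hx ih => simp [smul_dotProduct, ih]
  have hr_mem : ∀ i, r i ∈ Submodule.span ℚ (Set.range fun i => M i) :=
    fun i => hr_span ▸ Submodule.subset_span (Set.mem_range_self i)
  have hdefect : ∀ u ∈ Submodule.span ℚ (Set.range r), M *ᵥ u = 0 → u = 0 := by
    intro u hu hMu
    have hu' : u ∈ Submodule.span ℚ (Set.range fun i => M i) := hr_span ▸ hu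
    exact dotProduct_self_eq_zero.mp (hrow u hu' u hMu)
  -- linear independence of the columns of B
  have hMr_indep : LinearIndependent ℚ (fun i => M *ᵥ r i) := by
    have hd : Disjoint (Submodule.span ℚ (Set.range r)) (LinearMap.ker M.mulVecLin) := by
      rw [Submodule.disjoint_def]
      intro x hx hxk
      exact hdefect x hx (by simpa [Matrix.mulVecLin_apply] using hxk)
    have := hr_indep.map hd
    exact this
  have hdisj : Disjoint (Submodule.span ℚ (Set.range fun i => M *ᵥ r i))
      (Submodule.span ℚ (Set.range s)) := by
    rw [Submodule.disjoint_def]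
    intro x hx hxs
    have hxker : Mᵀ *ᵥ x = 0 := by
      have : x ∈ LinearMap.ker (Matrix.mulVecLin Mᵀ) := hs_span ▸ hxs
      simpa only [LinearMap.mem_ker, Matrix.mulVecLin_apply] using this
    clear hxs
    -- every element of the span of the M *ᵥ r i is M *ᵥ u for some u
    have hxr : ∃ u, M *ᵥ u = x := by
      clear hxker
      induction hx using Submodule.span_induction with
      | mem y hy => obtain ⟨i, rfl⟩ := hy; exact ⟨r i, rfl⟩
      | zero => exact ⟨0, by simp⟩
      | add y z hy hz ihy ihz =>
          obtain ⟨u1, h1⟩ := ihy; obtain ⟨u2, h2⟩ := ihz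
          exact ⟨u1 + u2, by simp [mulVec_add, h1, h2]⟩
      | smul a y hy ih =>
          obtain ⟨u, h1⟩ := ih
          exact ⟨a • u, by simp [mulVec_smul, h1]⟩
    obtain ⟨u, rfl⟩ := hxr
    exact dotProduct_self_eq_zero.mp (horth1 u _ hxker)
  have hc_indep : LinearIndependent ℚ c := hMr_indep.sum_type hs_indep hdisj
  -- the basis
  rcases Nat.eq_zero_or_pos m with hm | hm
  · subst hm
    obtain rfl : k = 0 := Nat.le_zero.mp hk
    haveI hie : IsEmpty (Fin 0 ⊕ Fin (0 - 0)) := by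
      constructor; rintro (⟨_, h⟩ | ⟨_, h⟩) <;> omega
    haveI : Subsingleton (Matrix (Fin 0 ⊕ Fin (0 - 0)) (Fin 0 ⊕ Fin (0 - 0)) ℚ) :=
      ⟨fun a b => by ext i j; exact (hie.false i).elim⟩
    haveI : Subsingleton (Matrix (Fin 0) (Fin 0) ℚ) :=
      ⟨fun a b => by ext i j; exact absurd i.2 (by omega)⟩
    haveI : Subsingleton (Matrix (Fin 0 ⊕ Fin (0 - 0)) (Fin 0) ℚ) :=
      ⟨fun a b => by ext i j; exact (hie.false i).elim⟩
    exact ⟨⟨0, Subsingleton.elim _ _, Subsingleton.elim _ _⟩,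
      fun B' _ _ => ⟨Subsingleton.elim _ _, Subsingleton.elim _ _,
        Subsingleton.elim _ _, Subsingleton.elim _ _⟩⟩
  have hne : Nonempty (Fin k ⊕ Fin (m - k)) := by
    rcases Nat.eq_zero_or_pos k with hk0 | hk0
    · exact ⟨Sum.inr ⟨0, by omega⟩⟩
    · exact ⟨Sum.inl ⟨0, hk0⟩⟩
  have hcard : Fintype.card (Fin k ⊕ Fin (m - k)) = Module.finrank ℚ (Fin m → ℚ) := by
    simp [Nat.add_sub_cancel' hk]
  let b : Module.Basis (Fin k ⊕ Fin (m - k)) ℚ (Fin m → ℚ) :=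
    basisOfLinearIndependentOfCardEqFinrank hc_indep hcard
  have hb : ⇑b = c := coe_basisOfLinearIndependentOfCardEqFinrank hc_indep hcard
  have hBmat : B = (Pi.basisFun ℚ (Fin m)).toMatrix ⇑b := by
    ext i j
    rw [Module.Basis.toMatrix_apply, Pi.basisFun_repr, hb]
    cases j <;> rfl
  constructor
  · refine ⟨b.toMatrix (Pi.basisFun ℚ (Fin m)), ?_, ?_⟩
    · rw [hBmat]; exact Module.Basis.toMatrix_mul_toMatrix_flip _ _
    · rw [hBmat]; exact Module.Basis.toMatrix_mul_toMatrix_flip _ _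
  intro B' hB1 hB2
  set A : Matrix (Fin m) (Fin k ⊕ Fin (m - k)) ℚ :=
    Matrix.of fun i j => Sum.elim (fun j₁ => r j₁ i) (fun _ => 0) j with hAdef
  set Y : Matrix (Fin m) (Fin m) ℚ := A * B' with hYdef
  have hYB : Y * B = A := by rw [hYdef, Matrix.mul_assoc, hB2, Matrix.mul_one]
  have hYc : ∀ j, Y *ᵥ c j = Sum.elim r (fun _ => (0 : Fin m → ℚ)) j := by
    intro j; funext i
    have h := congrFun (congrFun hYB i) j
    rw [Matrix.mul_apply] at h
    cases j with
    | inl p => simpa [Matrix.mulVec, dotProduct, hc, hBdef, hAdef] using h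
    | inr q => simpa [Matrix.mulVec, dotProduct, hc, hBdef, hAdef] using h
  have hY1 : ∀ i, Y *ᵥ (M *ᵥ r i) = r i := fun i => hYc (Sum.inl i)
  have hY2 : ∀ j, Y *ᵥ s j = 0 := fun j => hYc (Sum.inr j)
  set U1 : Submodule ℚ (Fin m → ℚ) := Submodule.span ℚ (Set.range fun i => M *ᵥ r i) with hU1
  set V1 : Submodule ℚ (Fin m → ℚ) := Submodule.span ℚ (Set.range s) with hV1
  set U2 : Submodule ℚ (Fin m → ℚ) := Submodule.span ℚ (Set.range r) with hU2
  set V2 : Submodule ℚ (Fin m → ℚ) := LinearMap.ker M.mulVecLin with hV2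
  have hsup1 : U1 ⊔ V1 = ⊤ := by
    have hspan := b.span_eq
    rw [hb, hc, Set.Sum.elim_range, Submodule.span_union] at hspan
    exact hspan
  have hVker : ∀ v ∈ V2, M *ᵥ v = 0 := fun v hv => by
    simpa only [hV2, LinearMap.mem_ker, Matrix.mulVecLin_apply] using hv
  have hsup2 : U2 ⊔ V2 = ⊤ := by
    have h1 : Module.finrank ℚ U2 = k := by
      rw [hU2, finrank_span_eq_card hr_indep, Fintype.card_fin]
    have hrk : Module.finrank ℚ (LinearMap.range M.mulVecLin) = k := hrank
    have h2 : Module.finrank ℚ V2 = m - k := by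
      have hrn := M.mulVecLin.finrank_range_add_finrank_ker
      have hpi : Module.finrank ℚ (Fin m → ℚ) = m := by simp
      rw [hpi, hrk] at hrn
      rw [hV2]; omega
    have hinf : U2 ⊓ V2 = ⊥ := by
      rw [eq_bot_iff]
      intro x hx
      have hxu : x ∈ U2 := hx.1
      have hxv : x ∈ V2 := hx.2
      have := hdefect x hxu (hVker x hxv)
      simp [this]
    have hfin := Submodule.finrank_sup_add_finrank_inf_eq U2 V2
    rw [hinf] at hfin
    simp only [finrank_bot, add_zero, h1, h2] at hfin
    have hpi : Module.finrank ℚ (Fin m → ℚ) = m := by simp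
    exact Submodule.eq_top_of_finrank_eq (by omega)
  have hP1u : ∀ u ∈ U1, (M * Y) *ᵥ u = u := by
    intro u hu
    induction hu using Submodule.span_induction with
    | mem x hx =>
        obtain ⟨i, rfl⟩ := hx
        rw [← mulVec_mulVec, hY1]
    | zero => simp
    | add x y hx hy ihx ihy => simp [mulVec_add, ihx, ihy]
    | smul a x hx ih => simp [mulVec_smul, ih]
  have hP1v : ∀ v ∈ V1, (M * Y) *ᵥ v = 0 := by
    intro v hv
    induction hv using Submodule.span_induction with
    | mem x hx =>
        obtain ⟨j, rfl⟩ := hx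
        rw [← mulVec_mulVec, hY2, mulVec_zero]
    | zero => simp
    | add x y hx hy ihx ihy => simp [mulVec_add, ihx, ihy]
    | smul a x hx ih => simp [mulVec_smul, ih]
  have hperp1 : ∀ u ∈ U1, ∀ v ∈ V1, u ⬝ᵥ v = 0 := by
    intro u hu
    induction hu using Submodule.span_induction with
    | mem x hx =>
        intro v hv
        obtain ⟨i, rfl⟩ := hx
        refine horth1 _ _ ?_
        have : v ∈ LinearMap.ker (Matrix.mulVecLin Mᵀ) := hs_span ▸ hv
        simpa only [LinearMap.mem_ker, Matrix.mulVecLin_apply] using this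
    | zero => intro v hv; simp
    | add x y hx hy ihx ihy => intro v hv; simp [add_dotProduct, ihx v hv, ihy v hv]
    | smul a x hx ih => intro v hv; simp [smul_dotProduct, ih v hv]
  have hYV : ∀ v ∈ V1, Y *ᵥ v = 0 := by
    intro v hv
    induction hv using Submodule.span_induction with
    | mem x hx => obtain ⟨j, rfl⟩ := hx; exact hY2 j
    | zero => simp
    | add x y hx hy ihx ihy => simp [mulVec_add, ihx, ihy]
    | smul a x hx ih => simp [mulVec_smul, ih]
  have hYU : ∀ p ∈ U1, Y *ᵥ p ∈ U2 := by
    intro p hp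
    induction hp using Submodule.span_induction with
    | mem x hx =>
        obtain ⟨i, rfl⟩ := hx
        rw [hY1]
        exact Submodule.subset_span (Set.mem_range_self i)
    | zero => simp
    | add x y hx hy ihx ihy =>
        rw [mulVec_add]; exact Submodule.add_mem _ ihx ihy
    | smul a x hx ih =>
        rw [mulVec_smul]; exact Submodule.smul_mem _ _ ih
  have hP2u : ∀ u ∈ U2, (Y * M) *ᵥ u = u := by
    intro u hu
    induction hu using Submodule.span_induction with
    | mem x hx =>
        obtain ⟨i, rfl⟩ := hx
        rw [← mulVec_mulVec, hY1]
    | zero => simp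
    | add x y hx hy ihx ihy => simp [mulVec_add, ihx, ihy]
    | smul a x hx ih => simp [mulVec_smul, ih]
  have hP2v : ∀ v ∈ V2, (Y * M) *ᵥ v = 0 := by
    intro v hv
    rw [← mulVec_mulVec, hVker v hv, mulVec_zero]
  have hperp2 : ∀ u ∈ U2, ∀ v ∈ V2, u ⬝ᵥ v = 0 := fun u hu v hv =>
    hrow u (hr_span ▸ hu) v (hVker v hv)
  have hmap : ∀ u ∈ U2, M *ᵥ u ∈ U1 := by
    intro u hu
    induction hu using Submodule.span_induction with
    | mem x hx =>
        obtain ⟨i, rfl⟩ := hx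
        exact Submodule.subset_span (Set.mem_range_self i)
    | zero => simp
    | add x y hx hy ihx ihy =>
        rw [mulVec_add]; exact Submodule.add_mem _ ihx ihy
    | smul a x hx ih =>
        rw [mulVec_smul]; exact Submodule.smul_mem _ _ ih
  refine ⟨?_, ?_, ?_, ?_⟩
  · apply mp_ext_helper
    intro x
    obtain ⟨u, hu, v, hv, rfl⟩ :=
      Submodule.mem_sup.mp (hsup2 ▸ Submodule.mem_top : x ∈ U2 ⊔ V2)
    have h1 : M *ᵥ (u + v) = M *ᵥ u := by rw [mulVec_add, hVker v hv, add_zero]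
    calc (M * Y * M) *ᵥ (u + v) = (M * Y) *ᵥ (M *ᵥ (u + v)) := by rw [mulVec_mulVec]
      _ = (M * Y) *ᵥ (M *ᵥ u) := by rw [h1]
      _ = M *ᵥ u := hP1u _ (hmap u hu)
      _ = M *ᵥ (u + v) := h1.symm
  · apply mp_ext_helper
    intro x
    obtain ⟨p, hp, q, hq, rfl⟩ :=
      Submodule.mem_sup.mp (hsup1 ▸ Submodule.mem_top : x ∈ U1 ⊔ V1)
    have h1 : Y *ᵥ (p + q) = Y *ᵥ p := by rw [mulVec_add, hYV q hq, add_zero]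
    calc (Y * M * Y) *ᵥ (p + q) = (Y * M) *ᵥ (Y *ᵥ (p + q)) := by rw [mulVec_mulVec]
      _ = (Y * M) *ᵥ (Y *ᵥ p) := by rw [h1]
      _ = Y *ᵥ p := hP2u _ (hYU p hp)
      _ = Y *ᵥ (p + q) := h1.symm
  · exact mp_sym_helper _ U2 V2 hsup2 hP2u hP2v hperp2
  · exact mp_sym_helper _ U1 V1 hsup1 hP1u hP1v hperp1
end
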